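/- (Core of Observations 2.1 and 2.2: characterization of the q-extension.) Let K be a field, let a : ℕ → K satisfy a(0) = 0 and a(1) = 1, and let f : ℕ → K be such that a(n) − a(k) = f(k)·a(n−k) for all natural numbers k ≤ n. Then, setting q = f(1), one has a(n) = Σ_{i=0}^{n-1} q^i for every n (i.e. a(n) = [n]_q is the Gaussian q-integer sequence) and f(k) = q^k for every k. -/

import Mathlib

/-- core of Observations 2.1 and 2.2: if `a 0 = 0`, `a 1 = 1` and
`a n − a k = f k · a (n−k)` for all `k ≤ n`, then with `q = f 1` one has
`a n = Σ_{i<n} q^i` (the Gaussian q-integers) and `f k = q^k` for all `k`. -/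
theorem q_extension_characterization {K : Type*} [Field K] (a f : ℕ → K)
    (ha0 : a 0 = 0) (ha1 : a 1 = 1)
    (h : ∀ n k : ℕ, k ≤ n → a n - a k = f k * a (n - k)) :
    (∀ n : ℕ, a n = ∑ i ∈ Finset.range n, (f 1) ^ i) ∧
      (∀ k : ℕ, f k = (f 1) ^ k) := by
  have key : ∀ n : ℕ, a n = ∑ i ∈ Finset.range n, (f 1) ^ i := by
    intro n
    induction n with
    | zero => simpa using ha0
    | succ m ih =>
      have := h (m + 1) 1 (by omega)
      simp only [Nat.add_sub_cancel, ha1] at this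
      rw [Finset.sum_range_succ', pow_zero]
      have : a (m + 1) = f 1 * a m + 1 := by linear_combination this
      rw [this, ih, Finset.mul_sum]
      simp [pow_succ, mul_comm]
  refine ⟨key, fun k => ?_⟩
  have := h (k + 1) k (by omega)
  simp only [Nat.add_sub_cancel_left, ha1, mul_one, key] at this
  rw [Finset.sum_range_succ] at this
  linear_combination -this
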